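/- arXiv:1412.7777 — 7 statements merged into one kernel-verified Lean document; each statement's English description precedes it below -/
import Mathlib

section
/- The polynomial u^m - P(t), viewed as a polynomial in u over the Laurent polynomial ring ℂ[t,t⁻¹], is irreducible whenever P(t) = t^l(t-a_1)⋯(t-a_n) with l ≥ 0, n ≥ 1, and pairwise distinct nonzero a_1,…,a_n, and m ≥ 2; hence the quotient ring R_m(P) = ℂ[t,t⁻¹][u]/(u^m - P(t)) is an integral domain. -/
open Polynomial

open LaurentPolynomial (T isUnit_T T_add)

noncomputable instance : IsDomain (LaurentPolynomial ℂ) := NoZeroDivisors.to_isDomain _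

lemma aux_exists (G : (LaurentPolynomial ℂ)[X]) :
    ∃ (k : ℕ) (G' : (Polynomial ℂ)[X]),
      G'.map Polynomial.toLaurent = G * Polynomial.C (T (k : ℤ)) := by
  induction G using Polynomial.induction_on' with
  | add p q hp hq =>
    obtain ⟨k₁, p', hp'⟩ := hp
    obtain ⟨k₂, q', hq'⟩ := hq
    refine ⟨k₁ + k₂, p' * Polynomial.C (X ^ k₂) + q' * Polynomial.C (X ^ k₁), ?_⟩
    push_cast
    simp only [Polynomial.map_add, Polynomial.map_mul, Polynomial.map_C,
      Polynomial.toLaurent_X_pow, hp', hq', ← T_add, ← Polynomial.C_mul, ← map_mul]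
    rw [T_add, Polynomial.C_mul]; ring
  | monomial n la =>
    obtain ⟨k, f', hf'⟩ := la.exists_T_pow
    refine ⟨k, Polynomial.monomial n f', ?_⟩
    rw [Polynomial.map_monomial, hf', mul_comm ((Polynomial.monomial n) la),
      Polynomial.C_mul_monomial, mul_comm]

lemma aux_map_inj : Function.Injective
    (Polynomial.map (Polynomial.toLaurent) : (Polynomial ℂ)[X] → (LaurentPolynomial ℂ)[X]) :=
  Polynomial.map_injective _ Polynomial.toLaurent_injective

lemma aux_unit_C_T (k : ℕ) : IsUnit (Polynomial.C (T (k : ℤ)) : (LaurentPolynomial ℂ)[X]) :=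
  (isUnit_T (k : ℤ)).map Polynomial.C

lemma aux_dvd {F : (Polynomial ℂ)[X]} (hF : Prime F) (hdeg : 1 ≤ F.natDegree)
    {G : (Polynomial ℂ)[X]}
    (h : F.map Polynomial.toLaurent ∣ G.map Polynomial.toLaurent) : F ∣ G := by
  obtain ⟨Z, hZ⟩ := h
  obtain ⟨k, Z', hZ'⟩ := aux_exists Z
  have key : G * Polynomial.C ((X : Polynomial ℂ) ^ k) = F * Z' := by
    apply aux_map_inj
    rw [Polynomial.map_mul, Polynomial.map_mul, Polynomial.map_C, Polynomial.toLaurent_X_pow,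
      hZ, hZ', mul_assoc]
  have hdvd : F ∣ G * (Polynomial.C (X : Polynomial ℂ)) ^ k := by
    rw [← Polynomial.C_pow, key]; exact Dvd.intro _ rfl
  rcases hF.dvd_mul.mp hdvd with h | h
  · exact h
  · exfalso
    have hX := hF.dvd_of_dvd_pow h
    have : F.natDegree ≤ (Polynomial.C (X : Polynomial ℂ)).natDegree :=
      Polynomial.natDegree_le_of_dvd hX (by simp [Polynomial.X_ne_zero])
    simp [Polynomial.natDegree_C] at this
    omega

lemma aux_prime {F : (Polynomial ℂ)[X]} (hF : Prime F) (hdeg : 1 ≤ F.natDegree) :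
    Prime (F.map (Polynomial.toLaurent)) := by
  constructor
  · simpa [Polynomial.map_eq_zero_iff Polynomial.toLaurent_injective] using hF.ne_zero
  constructor
  · intro hu
    have : F.map Polynomial.toLaurent ∣ (1 : (Polynomial ℂ)[X]).map Polynomial.toLaurent := by
      simpa using hu.dvd
    exact hF.not_unit (isUnit_of_dvd_one (aux_dvd hF hdeg this))
  · intro G H hGH
    obtain ⟨k, G', hG'⟩ := aux_exists G
    obtain ⟨j, H', hH'⟩ := aux_exists H
    have h1 : F.map Polynomial.toLaurent ∣ (G' * H').map Polynomial.toLaurent := by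
      rw [Polynomial.map_mul, hG', hH']
      have heq : G * Polynomial.C (T (k : ℤ)) * (H * Polynomial.C (T (j : ℤ))) =
          G * H * (Polynomial.C (T (k : ℤ)) * Polynomial.C (T (j : ℤ))) := by ring
      rw [heq]
      exact hGH.mul_right _
    rcases hF.dvd_mul.mp (aux_dvd hF hdeg h1) with h | h
    · left
      have := Polynomial.map_dvd (Polynomial.toLaurent (R := ℂ)) h
      rw [hG'] at this
      exact ((aux_unit_C_T k).dvd_mul_right).mp this
    · right
      have := Polynomial.map_dvd (Polynomial.toLaurent (R := ℂ)) h
      rw [hH'] at this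
      exact ((aux_unit_C_T j).dvd_mul_right).mp this

theorem stmt_0' (m l n : ℕ) (hm : 2 ≤ m) (hn : 1 ≤ n) (a : Fin n → ℂ)
    (ha0 : ∀ i, a i ≠ 0) (hinj : Function.Injective a) :
    Prime ((X : Polynomial (LaurentPolynomial ℂ)) ^ m -
      C (Polynomial.toLaurent (X ^ l * ∏ i, (X - C (a i))))) := by
  haveI : NeZero n := ⟨by omega⟩
  set P : Polynomial ℂ := X ^ l * ∏ i, (X - C (a i)) with hP
  set q : Polynomial ℂ := X - C (a 0) with hqdef
  have hq : Prime q := prime_X_sub_C _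
  have hm0 : m ≠ 0 := by omega
  have hmonic : (X ^ m - C P : (Polynomial ℂ)[X]).Monic := monic_X_pow_sub_C P hm0
  have hdegF : ((X : (Polynomial ℂ)[X]) ^ m - C P).degree = m := degree_X_pow_sub_C (by omega) P
  have hqP : q ∣ P := by
    refine Dvd.dvd.mul_left ?_ _
    exact Finset.dvd_prod_of_mem (fun i => X - C (a i)) (Finset.mem_univ 0)
  have hq2P : ¬ q ^ 2 ∣ P := by
    intro h
    rw [hP, ← Finset.mul_prod_erase Finset.univ _ (Finset.mem_univ 0)] at h
    have h' : q * q ∣ q * (X ^ l * ∏ i ∈ Finset.univ.erase 0, (X - C (a i))) := by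
      rw [← sq]
      refine h.trans (dvd_of_eq ?_)
      ring
    have h'' := (mul_dvd_mul_iff_left hq.ne_zero).mp h'
    rcases hq.dvd_mul.mp h'' with h3 | h3
    · have := hq.dvd_of_dvd_pow h3
      rw [hqdef, dvd_iff_isRoot] at this
      exact ha0 0 (by simpa [IsRoot] using this)
    · obtain ⟨i, hi, hdvd⟩ := (hq.dvd_finset_prod_iff _).mp h3
      rw [hqdef, dvd_iff_isRoot] at hdvd
      simp only [IsRoot, eval_sub, eval_X, eval_C, sub_eq_zero] at hdvd
      exact (Finset.ne_of_mem_erase hi) (hinj hdvd.symm)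
  have hirr : Irreducible ((X : (Polynomial ℂ)[X]) ^ m - C P) := by
    refine irreducible_of_eisenstein_criterion
      ((Ideal.span_singleton_prime (X_sub_C_ne_zero (a 0))).mpr hq) ?_ ?_ ?_ ?_
      hmonic.isPrimitive
    · rw [hmonic.leadingCoeff]
      intro h
      exact hq.not_unit (isUnit_of_dvd_one (Ideal.mem_span_singleton.mp h))
    · intro k hk
      rw [hdegF] at hk
      have hkm : k < m := by exact_mod_cast hk
      simp only [coeff_sub, coeff_X_pow, coeff_C, if_neg (by omega : ¬ k = m)]
      rcases Nat.eq_zero_or_pos k with rfl | hk0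
      · simp only [if_pos rfl, zero_sub]
        exact Ideal.mem_span_singleton.mpr ((dvd_neg).mpr hqP)
      · simp [if_neg (by omega : ¬ k = 0)]
    · rw [hdegF]
      exact_mod_cast Nat.pos_of_ne_zero hm0
    · simp only [coeff_sub, coeff_X_pow, if_neg (by omega : ¬ 0 = m), coeff_C, if_pos rfl,
        zero_sub, Ideal.span_singleton_pow, Ideal.mem_span_singleton]
      intro h
      exact hq2P ((dvd_neg).mp h)
  have hFprime : Prime ((X : (Polynomial ℂ)[X]) ^ m - C P) :=
    (UniqueFactorizationMonoid.irreducible_iff_prime).mp hirr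
  have hdeg1 : 1 ≤ ((X : (Polynomial ℂ)[X]) ^ m - C P).natDegree := by
    rw [natDegree_X_pow_sub_C]; omega
  have hmap : ((X : (Polynomial ℂ)[X]) ^ m - C P).map Polynomial.toLaurent =
      (X : Polynomial (LaurentPolynomial ℂ)) ^ m - C (Polynomial.toLaurent P) := by
    simp [Polynomial.map_sub, Polynomial.map_pow, Polynomial.map_X, Polynomial.map_C]
  have := aux_prime hFprime hdeg1
  rwa [hmap] at this


/-- The m-th superelliptic relation `u^m - P(t)` is irreducible over `ℂ[t,t⁻¹]`
when `P(t) = t^l (t-a₁)⋯(t-aₙ)` with the `aᵢ` distinct and nonzero, and the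
quotient ring `R_m(P)` is an integral domain. -/
theorem stmt_0 (m l n : ℕ) (hm : 2 ≤ m) (hn : 1 ≤ n) (a : Fin n → ℂ)
    (ha0 : ∀ i, a i ≠ 0) (hinj : Function.Injective a) :
    Irreducible ((X : Polynomial (LaurentPolynomial ℂ)) ^ m -
      C (Polynomial.toLaurent (X ^ l * ∏ i, (X - C (a i))))) ∧
    IsDomain (Polynomial (LaurentPolynomial ℂ) ⧸
      Ideal.span {(X : Polynomial (LaurentPolynomial ℂ)) ^ m -
        C (Polynomial.toLaurent (X ^ l * ∏ i, (X - C (a i))))}) := by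
  have hp := stmt_0' m l n hm hn a ha0 hinj
  haveI : (Ideal.span {(X : Polynomial (LaurentPolynomial ℂ)) ^ m -
      C (Polynomial.toLaurent (X ^ l * ∏ i, (X - C (a i))))}).IsPrime :=
    (Ideal.span_singleton_prime hp.ne_zero).mpr hp
  have hirr := Prime.irreducible (p := (X : Polynomial (LaurentPolynomial ℂ)) ^ m -
      C (Polynomial.toLaurent (X ^ l * ∏ i, (X - C (a i))))) hp
  exact ⟨hirr, Ideal.Quotient.isDomain _⟩
end

section
/- For P(t) = t - a² with a ∈ ℂ*, the ring R_2(P) = ℂ[t,t⁻¹,u]/(u² - (t - a²)) is isomorphic as a ℂ-algebra to the localization ℂ[s, s⁻¹, (s+1)⁻¹]. -/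
/-!
Over a field in which `2 * b ≠ 0`, the affine substitution `u = b (2 s + 1)` turns the conic
`u² = t + b²` into `t = (2 b)² s (s + 1)`. Hence inverting `t` is the same as inverting
`s (s + 1)`, and `R₂ (t + b²) ≅ K[s, s⁻¹, (s + 1)⁻¹]`. The theorem is the case `K = ℂ`, `b = i a`.
-/
open Polynomial
open scoped LaurentPolynomial

instance LaurentPolynomial.isScalarTower_polynomial (R : Type*) [CommSemiring R] :
    IsScalarTower R R[X] R[T;T⁻¹] :=
  .of_algebraMap_eq' (Polynomial.toLaurentAlg (R := R)).comp_algebraMap.symm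

theorem LaurentPolynomial.algHom_ext {R A : Type*} [CommSemiring R] [Semiring A] [Algebra R A]
    {f g : R[T;T⁻¹] →ₐ[R] A} (h : f (T 1) = g (T 1)) : f = g :=
  IsLocalization.algHom_ext (Submonoid.powers (X : R[X])) <| Polynomial.algHom_ext <| by
    rwa [← Polynomial.toLaurent_X] at h

/-- `R₂ P = R[t, t⁻¹, u] / (u² - P(t))`, with `t = T 1` and `u = AdjoinRoot.root _`. -/
abbrev R₂ {R : Type*} [CommRing R] (P : R[X]) : Type _ :=
  AdjoinRoot (X ^ 2 - C (toLaurent P) : R[T;T⁻¹][X])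

namespace R₂

variable {R : Type*} [CommRing R] (P : R[X])

noncomputable def t : R₂ P := AdjoinRoot.of _ (LaurentPolynomial.T 1)

theorem isUnit_t : IsUnit (t P) := (LaurentPolynomial.isUnit_T 1).map _

theorem root_sq :
    AdjoinRoot.root _ ^ 2 = AdjoinRoot.of (X ^ 2 - C (toLaurent P)) (toLaurent P) := by
  rw [← sub_eq_zero, ← AdjoinRoot.mk_X, ← AdjoinRoot.mk_C, ← map_pow, ← map_sub]
  exact AdjoinRoot.mk_self

theorem root_sq_of_eq_X_add_C (c : R) :
    AdjoinRoot.root _ ^ 2 = t (X + C c) + algebraMap R _ c := by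
  rw [root_sq, AdjoinRoot.algebraMap_eq', RingHom.comp_apply, ← LaurentPolynomial.C_eq_algebraMap]
  simp [t]

end R₂

section AffineChange

variable {K B : Type*} [Field K] [CommRing B] [Algebra K B] {b : K}

theorem sq_mul_two_mul_add_one (b : K) (s : B) :
    (algebraMap K B b * (2 * s + 1)) ^ 2 =
      algebraMap K B ((2 * b) ^ 2) * (s * (s + 1)) + algebraMap K B (b ^ 2) := by
  simp only [map_mul, map_pow, map_ofNat]
  ring

theorem mul_two_mul_inv_mul_sub_add_one (hb : 2 * b ≠ 0) (u : B) :
    algebraMap K B b * (2 * (algebraMap K B (2 * b)⁻¹ * (u - algebraMap K B b)) + 1) = u := by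
  have h : algebraMap K B (2 * b) * algebraMap K B (2 * b)⁻¹ = 1 := by
    rw [← map_mul, mul_inv_cancel₀ hb, map_one]
  simp only [map_mul, map_ofNat] at h
  linear_combination (u - algebraMap K B b) * h

theorem inv_mul_mul_two_mul_add_one_sub (hb : 2 * b ≠ 0) (s : B) :
    algebraMap K B (2 * b)⁻¹ * (algebraMap K B b * (2 * s + 1) - algebraMap K B b) = s := by
  have h : algebraMap K B (2 * b) * algebraMap K B (2 * b)⁻¹ = 1 := by
    rw [← map_mul, mul_inv_cancel₀ hb, map_one]
  simp only [map_mul, map_ofNat] at h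
  linear_combination s * h

end AffineChange

abbrev TwicePuncturedLine (K : Type*) [Field K] : Type _ :=
  Localization.Away (X * (X + 1) : K[X])

namespace TwicePuncturedLine

variable {K : Type*} [Field K]

noncomputable def s : TwicePuncturedLine K := algebraMap K[X] _ X

theorem isUnit_s_mul_s_add_one : IsUnit (s * (s + 1) : TwicePuncturedLine K) := by
  have h := IsLocalization.Away.algebraMap_isUnit (S := TwicePuncturedLine K)
    (X * (X + 1) : K[X])
  rwa [map_mul, map_add, map_one] at h

theorem algHom_ext {B : Type*} [Semiring B] [Algebra K B] {f g : TwicePuncturedLine K →ₐ[K] B}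
    (h : f s = g s) : f = g :=
  Localization.algHom_ext _ (Polynomial.algHom_ext h)

end TwicePuncturedLine

namespace R₂

variable {K : Type*} [Field K] {b : K}

noncomputable def laurentToLine (hb : 2 * b ≠ 0) : K[T;T⁻¹] →ₐ[K] TwicePuncturedLine K :=
  IsLocalization.Away.liftAlgHom (X : K[X])
    (f := aeval
      (algebraMap K _ ((2 * b) ^ 2) * (TwicePuncturedLine.s * (TwicePuncturedLine.s + 1))))
    (by
      rw [aeval_X]
      exact ((isUnit_iff_ne_zero.mpr (pow_ne_zero 2 hb)).map _).mul
        TwicePuncturedLine.isUnit_s_mul_s_add_one)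

theorem laurentToLine_toLaurent (hb : 2 * b ≠ 0) (p : K[X]) :
    laurentToLine hb (toLaurent p) =
      aeval (algebraMap K _ ((2 * b) ^ 2) *
        (TwicePuncturedLine.s * (TwicePuncturedLine.s + 1))) p :=
  IsLocalization.lift_eq _ p

noncomputable def toLine (hb : 2 * b ≠ 0) : R₂ (X + C (b ^ 2)) →ₐ[K] TwicePuncturedLine K :=
  AdjoinRoot.liftAlgHom _ (laurentToLine hb) (algebraMap K _ b * (2 * TwicePuncturedLine.s + 1))
    (by rw [eval₂_sub, eval₂_X_pow, eval₂_C, AlgHom.coe_toRingHom, laurentToLine_toLaurent,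
      map_add, aeval_X, aeval_C, sq_mul_two_mul_add_one, sub_self])

noncomputable def s (b : K) : R₂ (X + C (b ^ 2)) :=
  algebraMap K _ (2 * b)⁻¹ * (AdjoinRoot.root _ - algebraMap K _ b)

theorem mul_two_mul_s_add_one (hb : 2 * b ≠ 0) :
    algebraMap K _ b * (2 * s b + 1) = AdjoinRoot.root (X ^ 2 - C (toLaurent (X + C (b ^ 2)))) :=
  mul_two_mul_inv_mul_sub_add_one hb _

theorem sq_mul_s_mul_s_add_one (hb : 2 * b ≠ 0) :
    algebraMap K _ ((2 * b) ^ 2) * (s b * (s b + 1)) = t (X + C (b ^ 2)) := by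
  have h := sq_mul_two_mul_add_one b (s b)
  rw [mul_two_mul_s_add_one hb, root_sq_of_eq_X_add_C] at h
  exact (add_right_cancel h).symm

theorem isUnit_s_mul_s_add_one (hb : 2 * b ≠ 0) : IsUnit (s b * (s b + 1)) :=
  isUnit_of_mul_isUnit_right (sq_mul_s_mul_s_add_one hb ▸ isUnit_t _)

noncomputable def ofLine (hb : 2 * b ≠ 0) : TwicePuncturedLine K →ₐ[K] R₂ (X + C (b ^ 2)) :=
  IsLocalization.Away.liftAlgHom (X * (X + 1) : K[X]) (f := aeval (s b)) (by
    simpa using isUnit_s_mul_s_add_one hb)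

theorem ofLine_s (hb : 2 * b ≠ 0) : ofLine hb TwicePuncturedLine.s = s b := by
  rw [ofLine, IsLocalization.Away.liftAlgHom_apply, TwicePuncturedLine.s,
    IsLocalization.Away.lift_eq]
  exact aeval_X _

theorem toLine_t (hb : 2 * b ≠ 0) :
    toLine hb (t _) =
      algebraMap K _ ((2 * b) ^ 2) * (TwicePuncturedLine.s * (TwicePuncturedLine.s + 1)) := by
  rw [t, toLine, AdjoinRoot.liftAlgHom_of, ← toLaurent_X, laurentToLine_toLaurent, aeval_X]

theorem toLine_root (hb : 2 * b ≠ 0) :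
    toLine hb (AdjoinRoot.root _) = algebraMap K _ b * (2 * TwicePuncturedLine.s + 1) :=
  AdjoinRoot.liftAlgHom_root _ _ _ _

theorem toLine_comp_ofLine (hb : 2 * b ≠ 0) :
    (toLine hb).comp (ofLine hb) = AlgHom.id K (TwicePuncturedLine K) :=
  TwicePuncturedLine.algHom_ext <| by
    rw [AlgHom.comp_apply, AlgHom.id_apply, ofLine_s, s, map_mul, map_sub, AlgHom.commutes,
      AlgHom.commutes, toLine_root, inv_mul_mul_two_mul_add_one_sub hb]

theorem ofLine_comp_toLine (hb : 2 * b ≠ 0) :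
    (ofLine hb).comp (toLine hb) = AlgHom.id K (R₂ (X + C (b ^ 2))) := by
  refine AdjoinRoot.algHom_ext' (LaurentPolynomial.algHom_ext ?_) ?_
  · change ofLine hb (toLine hb (t _)) = t _
    rw [toLine_t, map_mul, AlgHom.commutes, map_mul (ofLine hb), map_add (ofLine hb), map_one,
      ofLine_s, sq_mul_s_mul_s_add_one hb]
  · rw [AlgHom.comp_apply, AlgHom.id_apply, toLine_root, map_mul, AlgHom.commutes,
      map_add (ofLine hb), map_mul (ofLine hb), map_ofNat, map_one, ofLine_s,
      mul_two_mul_s_add_one hb]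

noncomputable def equivLine (hb : 2 * b ≠ 0) : R₂ (X + C (b ^ 2)) ≃ₐ[K] TwicePuncturedLine K :=
  AlgEquiv.ofAlgHom (toLine hb) (ofLine hb) (toLine_comp_ofLine hb) (ofLine_comp_toLine hb)

end R₂

/-- For `P(t) = t - a²` with `a ≠ 0`, `R_2(P)` is isomorphic as a ℂ-algebra to
`ℂ[s, s⁻¹, (s+1)⁻¹]`, realized as the localization of `ℂ[s]` away from `s(s+1)`. -/
theorem stmt_6 (a : ℂ) (ha : a ≠ 0) :
    Nonempty
      ((Polynomial (LaurentPolynomial ℂ) ⧸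
          Ideal.span {(X : Polynomial (LaurentPolynomial ℂ)) ^ 2 -
            C (Polynomial.toLaurent (X - C (a ^ 2)))}) ≃ₐ[ℂ]
        Localization.Away ((X * (X + 1)) : Polynomial ℂ)) := by
  have hP : (X - C (a ^ 2) : ℂ[X]) = X + C ((Complex.I * a) ^ 2) := by
    rw [mul_pow, Complex.I_sq, neg_one_mul, C_neg, sub_eq_add_neg]
  rw [hP]
  exact ⟨R₂.equivLine (by simp [ha])⟩
end

section
/- Let P ∈ ℂ[t] with P(0) = 0, P nonconstant. An element of R_2(P) is a unit if and only if it is of the form t^i·(f + g√P) where i ∈ ℤ, f, g ∈ ℂ[t], and f² - g²·P = c·t^k for some c ∈ ℂ* and k ∈ ℤ≥0. -/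
/-!
Write `R = ℂ[t,t⁻¹]`, so that `R_2(P) = R[X]/(X² - P)`. Every element of it is uniquely `a + b√P`
with `a, b ∈ R`, and `(a + b√P)(a - b√P) = a² - b²P`; since the norm `a² - b²P` is multiplicative,
`a + b√P` is a unit iff its norm is a unit of `R`. Multiplying `a` and `b` by a common power `t^N`
turns them into polynomials `f, g` and the norm into `t^(-2N)(f² - g²P)`, and a polynomial is a unit
of `R` exactly when it is `c·t^k` with `c ≠ 0`.
-/

open Polynomial

/-- The defining ideal of `R_2(P) = ℂ[t,t⁻¹,u]/(u² - P(t))`. -/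
noncomputable abbrev R2ideal (P : Polynomial ℂ) : Ideal (Polynomial (LaurentPolynomial ℂ)) :=
  Ideal.span {(X : Polynomial (LaurentPolynomial ℂ)) ^ 2 - C (Polynomial.toLaurent P)}

/-- `R_2(P) = ℂ[t,t⁻¹,u]/(u² - P(t))`. -/
abbrev R2P (P : Polynomial ℂ) : Type :=
  Polynomial (LaurentPolynomial ℂ) ⧸ R2ideal P

open LaurentPolynomial in
theorem Polynomial.isUnit_toLaurent_iff {R : Type*} [CommRing R] [IsDomain R] {p : R[X]} :
    IsUnit (toLaurent p) ↔ ∃ (c : R) (k : ℕ), IsUnit c ∧ p = C c * X ^ k := by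
  constructor
  · intro h
    obtain ⟨b, hb⟩ := h.exists_right_inv
    obtain ⟨m, g, hg⟩ := b.exists_T_pow
    have hpg : p * g = X ^ m := toLaurent_injective <| by
      rw [map_mul, hg, ← mul_assoc, hb, one_mul, toLaurent_X_pow]
    obtain ⟨k, -, u, hu⟩ := (dvd_prime_pow prime_X m).1 ⟨g, hpg.symm⟩
    obtain ⟨c, hc, hcu⟩ := Polynomial.isUnit_iff.1 u⁻¹.isUnit
    refine ⟨c, k, hc, ?_⟩
    rw [hcu, mul_comm, Units.eq_mul_inv_iff_mul_eq, hu]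
  · rintro ⟨c, k, hc, rfl⟩
    rw [toLaurent_C_mul_X_pow]
    exact (hc.map LaurentPolynomial.C).mul (isUnit_T k)

open LaurentPolynomial in
theorem LaurentPolynomial.exists_T_pow_pair {R : Type*} [CommSemiring R] (a b : R[T;T⁻¹]) :
    ∃ (N : ℕ) (f g : R[X]), toLaurent f = a * T N ∧ toLaurent g = b * T N := by
  obtain ⟨m, f, hf⟩ := a.exists_T_pow
  obtain ⟨n, g, hg⟩ := b.exists_T_pow
  refine ⟨m + n, f * X ^ n, g * X ^ m, ?_, ?_⟩
  · rw [map_mul, hf, toLaurent_X_pow, mul_assoc, ← T_add]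
    push_cast
    rfl
  · rw [map_mul, hg, toLaurent_X_pow, mul_assoc, ← T_add]
    push_cast
    rw [add_comm]

namespace AdjoinRoot

variable {R : Type*} [CommRing R] {d : R}

theorem exists_mk_C_add_C_mul_X_eq [Nontrivial R] (z : AdjoinRoot (X ^ 2 - C d)) :
    ∃ a b : R, mk _ (C a + C b * X) = z := by
  have hmonic := monic_X_pow_sub_C d two_ne_zero
  obtain ⟨q, rfl⟩ := mk_surjective z
  have hdeg : (q %ₘ (X ^ 2 - C d)).degree ≤ 1 := by
    have := degree_modByMonic_lt q hmonic
    rw [degree_X_pow_sub_C two_pos] at this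
    exact Order.le_of_lt_succ this
  refine ⟨(q %ₘ (X ^ 2 - C d)).coeff 0, (q %ₘ (X ^ 2 - C d)).coeff 1, ?_⟩
  rw [add_comm, ← eq_X_add_C_of_degree_le_one hdeg, ← modByMonicHom_mk hmonic]
  exact mk_leftInverse hmonic _

theorem eq_of_mk_C_add_C_mul_X_eq [Nontrivial R] {a b a' b' : R}
    (h : mk (X ^ 2 - C d) (C a + C b * X) = mk _ (C a' + C b' * X)) : a = a' ∧ b = b' := by
  have hmonic := monic_X_pow_sub_C d two_ne_zero
  have hlt (a b : R) : (C a + C b * X).degree < (X ^ 2 - C d).degree := by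
    rw [degree_X_pow_sub_C two_pos, add_comm]
    exact degree_linear_le.trans_lt (by norm_num)
  have h' := congrArg (modByMonicHom hmonic) h
  rw [modByMonicHom_mk, modByMonicHom_mk, (modByMonic_eq_self_iff hmonic).2 (hlt _ _),
    (modByMonic_eq_self_iff hmonic).2 (hlt _ _)] at h'
  exact ⟨by simpa using congrArg (coeff · 0) h', by simpa using congrArg (coeff · 1) h'⟩

theorem mk_C_add_C_mul_X_mul (a b u v : R) :
    mk (X ^ 2 - C d) (C a + C b * X) * mk _ (C u + C v * X) =
      mk _ (C (a * u + b * v * d) + C (a * v + b * u) * X) := by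
  rw [← map_mul, mk_eq_mk]
  exact ⟨C (b * v), by simp only [map_add, map_mul]; ring⟩

theorem isUnit_mk_C_add_C_mul_X_iff [Nontrivial R] {a b : R} :
    IsUnit (mk (X ^ 2 - C d) (C a + C b * X)) ↔ IsUnit (a ^ 2 - b ^ 2 * d) := by
  constructor
  · intro h
    obtain ⟨w, hw⟩ := h.exists_right_inv
    obtain ⟨u, v, rfl⟩ := exists_mk_C_add_C_mul_X_eq w
    rw [mk_C_add_C_mul_X_mul, ← map_one (mk _), ← map_one C, ← add_zero (C 1), ← zero_mul X,
      ← map_zero C] at hw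
    obtain ⟨h1, h0⟩ := eq_of_mk_C_add_C_mul_X_eq hw
    exact IsUnit.of_mul_eq_one (u ^ 2 - v ^ 2 * d) <| by
      linear_combination (a * u + b * v * d + 1) * h1 - (a * v + b * u) * d * h0
  · intro h
    have hconj := mk_C_add_C_mul_X_mul (d := d) a b a (-b)
    rw [show a * -b + b * a = 0 by ring, map_zero, zero_mul, add_zero,
      show a * a + b * -b * d = a ^ 2 - b ^ 2 * d by ring] at hconj
    exact isUnit_of_mul_isUnit_left (hconj ▸ (h.map C).map (mk _))

end AdjoinRoot

theorem isUnit_adjoinRoot_sqrt_toLaurent_iff {R : Type*} [CommRing R] [IsDomain R] (p : R[X])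
    (z : AdjoinRoot (X ^ 2 - C (toLaurent p))) :
    IsUnit z ↔ ∃ (i : ℤ) (f g : R[X]) (c : R) (k : ℕ), IsUnit c ∧ f ^ 2 - g ^ 2 * p = C c * X ^ k ∧
      z = AdjoinRoot.mk _ (C (LaurentPolynomial.T i)) *
        AdjoinRoot.mk _ (C (toLaurent f) + C (toLaurent g) * X) := by
  constructor
  · intro hz
    obtain ⟨a, b, rfl⟩ := AdjoinRoot.exists_mk_C_add_C_mul_X_eq z
    obtain ⟨N, f, g, hf, hg⟩ := LaurentPolynomial.exists_T_pow_pair a b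
    have hnorm : toLaurent (f ^ 2 - g ^ 2 * p) =
        (a ^ 2 - b ^ 2 * toLaurent p) * LaurentPolynomial.T N ^ 2 := by
      rw [map_sub, map_mul, map_pow, map_pow, hf, hg]
      ring
    obtain ⟨c, k, hc, hfg⟩ := isUnit_toLaurent_iff.1 <| hnorm ▸
      (AdjoinRoot.isUnit_mk_C_add_C_mul_X_iff.1 hz).mul ((LaurentPolynomial.isUnit_T N).pow 2)
    refine ⟨-N, f, g, c, k, hc, hfg, ?_⟩
    have hT : (C (LaurentPolynomial.T (-N)) * C (LaurentPolynomial.T N) : (LaurentPolynomial R)[X]) = 1 := by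
      rw [← map_mul, ← LaurentPolynomial.T_add, neg_add_cancel, LaurentPolynomial.T_zero, map_one]
    rw [← map_mul, hf, hg]
    congr 1
    simp only [map_mul]
    linear_combination (-(C a + C b * X)) * hT
  · rintro ⟨i, f, g, c, k, hc, hfg, rfl⟩
    refine ((LaurentPolynomial.isUnit_T i).map ((AdjoinRoot.mk _).comp C)).mul
      (AdjoinRoot.isUnit_mk_C_add_C_mul_X_iff.2 ?_)
    rw [← map_pow, ← map_pow, ← map_mul, ← map_sub, hfg]
    exact isUnit_toLaurent_iff.2 ⟨c, k, hc, rfl⟩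

theorem stmt_12_general (P : Polynomial ℂ) (z : R2P P) :
    IsUnit z ↔
      ∃ (i : ℤ) (f g : Polynomial ℂ) (c : ℂ) (k : ℕ),
        c ≠ 0 ∧ f ^ 2 - g ^ 2 * P = C c * X ^ k ∧
        z = Ideal.Quotient.mk (R2ideal P) (C (LaurentPolynomial.T i)) *
          Ideal.Quotient.mk (R2ideal P) (C (Polynomial.toLaurent f) +
            C (Polynomial.toLaurent g) * X) := by
  have h := isUnit_adjoinRoot_sqrt_toLaurent_iff P z
  simp only [isUnit_iff_ne_zero] at h
  exact h

/-- For nonconstant `P` with `P(0) = 0` (and `R_2(P)` a domain), an element of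
`R_2(P)` is a unit iff it is of the form `tⁱ(f + g√P)` with `f, g ∈ ℂ[t]` and
`f² - g²P = c·t^k`, `c ∈ ℂ*`, `k ≥ 0`. -/
theorem stmt_12 (P : Polynomial ℂ) (hP : P.natDegree ≠ 0) (h0 : P.eval 0 = 0)
    (hdom : IsDomain (R2P P)) (z : R2P P) :
    IsUnit z ↔
      ∃ (i : ℤ) (f g : Polynomial ℂ) (c : ℂ) (k : ℕ),
        c ≠ 0 ∧ f ^ 2 - g ^ 2 * P = C c * X ^ k ∧
        z = Ideal.Quotient.mk (R2ideal P) (C (LaurentPolynomial.T i)) *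
          Ideal.Quotient.mk (R2ideal P) (C (Polynomial.toLaurent f) +
            C (Polynomial.toLaurent g) * X) :=
  stmt_12_general P z
end

section
/- Suppose P(t) ∈ ℂ[t] has odd degree, no multiple roots, and t divides P. Then the equation f² - g²·P = t^k with f, g ∈ ℂ[t], gcd(f,g) = 1, g ≠ 0, k ∈ ℤ≥0 has a solution if and only if deg(P) = 1 and k = 1; moreover if P = c²t the only solutions of f² - g²t = t are f = 0, g = ±√(-1)/c. -/
open Polynomial

private lemma degB {p q : Polynomial ℂ} {a : ℂ} (h : p - q = C a)
    (hne : p.natDegree ≠ q.natDegree) : False := by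
  rcases lt_or_gt_of_ne hne with hlt | hlt
  · have h1 : (p - q).natDegree = q.natDegree :=
      natDegree_sub_eq_right_of_natDegree_lt hlt
    rw [h, natDegree_C] at h1
    omega
  · have h1 : (p - q).natDegree = p.natDegree :=
      natDegree_sub_eq_left_of_natDegree_lt hlt
    rw [h, natDegree_C] at h1
    omega

private lemma keyA {f₁ g Q : Polynomial ℂ} (hg : g ≠ 0) (hQ : Q ≠ 0)
    (hQe : Even Q.natDegree) (h : X * f₁ ^ 2 - g ^ 2 * Q = 1) :
    f₁ = 0 ∧ g ^ 2 * Q = -1 := by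
  have hf₁ : f₁ = 0 := by
    by_contra hf
    refine degB (a := 1) (by rw [map_one]; exact h) ?_
    have h1 : (X * f₁ ^ 2).natDegree = 1 + 2 * f₁.natDegree := by
      rw [natDegree_mul X_ne_zero (pow_ne_zero 2 hf), natDegree_X, natDegree_pow]
    have h2 : (g ^ 2 * Q).natDegree = 2 * g.natDegree + Q.natDegree := by
      rw [natDegree_mul (pow_ne_zero 2 hg) hQ, natDegree_pow]
    intro he
    rw [h1, h2] at he
    obtain ⟨m, hm⟩ := hQe
    omega
  subst hf₁
  exact ⟨rfl, by linear_combination -h⟩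

/-- Suppose `P` has odd degree, no multiple roots, and `t ∣ P`. Then
`f² - g²P = t^k` with `f, g` coprime and `g ≠ 0` has a solution iff
`deg P = 1` and `k = 1`; moreover if `P = c²t` the only solutions of
`f² - g²P = t` are `f = 0`, `g = ±√(-1)/c`. -/
theorem stmt_14 (P : Polynomial ℂ) (hodd : Odd P.natDegree) (hsep : P.Separable)
    (hdvd : X ∣ P) :
    (∀ k : ℕ,
      (∃ f g : Polynomial ℂ, IsCoprime f g ∧ g ≠ 0 ∧ f ^ 2 - g ^ 2 * P = X ^ k) ↔
        (P.natDegree = 1 ∧ k = 1)) ∧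
    (∀ c : ℂ, c ≠ 0 → P = C (c ^ 2) * X →
      ∀ f g : Polynomial ℂ, f ^ 2 - g ^ 2 * P = X →
        f = 0 ∧ (g = C (Complex.I / c) ∨ g = C (-(Complex.I / c)))) := by
  have hP0 : P ≠ 0 := by
    rintro rfl
    simp [Nat.odd_iff] at hodd
  obtain ⟨Q, hPQ⟩ := hdvd
  have hQ0 : Q ≠ 0 := by rintro rfl; rw [mul_zero] at hPQ; exact hP0 hPQ
  have hdeg : P.natDegree = 1 + Q.natDegree := by
    rw [hPQ, natDegree_mul X_ne_zero hQ0, natDegree_X]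
  have hQe : Even Q.natDegree := by
    rw [Nat.even_iff]; rw [hdeg, Nat.odd_iff] at hodd; omega
  have hQc : Q.eval 0 ≠ 0 := by
    intro h0
    have hXQ : X ∣ Q := by rwa [X_dvd_iff, coeff_zero_eq_eval_zero]
    exact not_isUnit_X (hsep.squarefree X (hPQ ▸ mul_dvd_mul_left X hXQ))
  have hPeval : P.eval 0 = 0 := by rw [hPQ]; simp
  constructor
  · intro k
    constructor
    · rintro ⟨f, g, hco, hg, heq⟩
      have hk0 : k ≠ 0 := by
        rintro rfl
        rw [pow_zero] at heq
        refine degB (a := 1) (by rw [map_one]; exact heq) ?_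
        have h1 : (f ^ 2).natDegree = 2 * f.natDegree := natDegree_pow f 2
        have h2 : (g ^ 2 * P).natDegree = 2 * g.natDegree + P.natDegree := by
          rw [natDegree_mul (pow_ne_zero 2 hg) hP0, natDegree_pow]
        intro he
        rw [h1, h2] at he
        obtain ⟨m, hm⟩ := hodd
        omega
      obtain ⟨k', rfl⟩ : ∃ k', k = k' + 1 := ⟨k - 1, by omega⟩
      have hf0 : f.eval 0 = 0 := by
        have := congrArg (eval 0) heq
        simpa [hPeval] using this
      obtain ⟨f₁, rfl⟩ : X ∣ f := by rwa [X_dvd_iff, coeff_zero_eq_eval_zero]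
      rw [hPQ, pow_succ] at heq
      have hkey : X * f₁ ^ 2 - g ^ 2 * Q = X ^ k' :=
        mul_left_cancel₀ (X_ne_zero (R := ℂ)) (by linear_combination heq)
      have hgeval : g.eval 0 ≠ 0 := by
        intro h0
        have hXg : X ∣ g := by rwa [X_dvd_iff, coeff_zero_eq_eval_zero]
        exact not_isUnit_X (hco.isUnit_of_dvd' (Dvd.intro f₁ rfl) hXg)
      have hk'0 : k' = 0 := by
        by_contra hk'
        have := congrArg (eval 0) hkey
        simp [zero_pow hk'] at this
        rcases this with h | h
        exacts [hgeval h, hQc h]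
      subst hk'0
      rw [pow_zero] at hkey
      obtain ⟨hf₁, hgQ⟩ := keyA hg hQ0 hQe hkey
      have hdQ : Q.natDegree = 0 := by
        have := congrArg natDegree hgQ
        rw [natDegree_mul (pow_ne_zero 2 hg) hQ0, natDegree_pow] at this
        simp at this
        exact this.2
      exact ⟨by rw [hdeg, hdQ], rfl⟩
    · rintro ⟨hdeg1, rfl⟩
      have hdQ : Q.natDegree = 0 := by omega
      have hQC : Q = C (Q.coeff 0) := eq_C_of_natDegree_eq_zero hdQ
      set q := Q.coeff 0 with hq
      have hq0 : q ≠ 0 := by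
        intro h; rw [h, map_zero] at hQC; exact hQ0 hQC
      obtain ⟨b, hb⟩ := IsAlgClosed.exists_pow_nat_eq (-q⁻¹ : ℂ) (n := 2) two_pos
      have hbq : b ^ 2 * q = -1 := by rw [hb]; field_simp
      have hb0 : b ≠ 0 := by
        intro h; rw [h] at hb; simp at hb; exact hq0 hb
      refine ⟨0, C b, isCoprime_zero_left.mpr ((isUnit_C).mpr (isUnit_iff_ne_zero.mpr hb0)),
        by simpa using hb0, ?_⟩
      rw [hPQ, hQC]
      have hC : (C b : Polynomial ℂ) ^ 2 * C q = -1 := by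
        rw [← C_pow, ← C_mul, hbq, map_neg, map_one]
      linear_combination (-(X : Polynomial ℂ)) * hC
  · intro c hc hP f g heq
    have hf0 : f.eval 0 = 0 := by
      have := congrArg (eval 0) heq
      simpa [hP] using this
    obtain ⟨f₁, rfl⟩ : X ∣ f := by rwa [X_dvd_iff, coeff_zero_eq_eval_zero]
    rw [hP] at heq
    have hkey : X * f₁ ^ 2 - g ^ 2 * C (c ^ 2) = 1 :=
      mul_left_cancel₀ (X_ne_zero (R := ℂ)) (by linear_combination heq)
    have hgc : g.eval 0 ^ 2 * c ^ 2 = -1 := by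
      have := congrArg (eval 0) hkey
      simp at this
      linear_combination -this
    have hg : g ≠ 0 := by
      intro h; rw [h] at hgc; simp at hgc
    have hC2 : (C (c ^ 2) : Polynomial ℂ) ≠ 0 := by
      simp [pow_eq_zero_iff, hc]
    obtain ⟨hf₁, hgQ⟩ := keyA hg hC2 (by simp) hkey
    subst hf₁
    refine ⟨by simp, ?_⟩
    have hdg : g.natDegree = 0 := by
      have := congrArg natDegree hgQ
      rw [natDegree_mul (pow_ne_zero 2 hg) hC2, natDegree_pow] at this
      simp at this
      exact this
    have hgC : g = C (g.coeff 0) := eq_C_of_natDegree_eq_zero hdg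
    set d := g.coeff 0 with hd
    have hdc : d ^ 2 * c ^ 2 = -1 := by
      have := hgQ
      rw [hgC, ← C_pow, ← C_mul] at this
      have h2 : (C (d ^ 2 * c ^ 2) : Polynomial ℂ) = C (-1) := by
        rw [this, map_neg, map_one]
      exact C_injective h2
    have hfac : (d - Complex.I / c) * (d + Complex.I / c) = 0 := by
      have hI : (Complex.I) ^ 2 = -1 := Complex.I_sq
      have hc2 : (c : ℂ) ^ 2 ≠ 0 := pow_ne_zero 2 hc
      have hd2 : d ^ 2 = -1 / c ^ 2 := (eq_div_iff hc2).mpr hdc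
      calc (d - Complex.I / c) * (d + Complex.I / c)
          = d ^ 2 - Complex.I ^ 2 / c ^ 2 := by ring
        _ = -1 / c ^ 2 - (-1) / c ^ 2 := by rw [hd2, hI]
        _ = 0 := by ring
    rcases mul_eq_zero.mp hfac with h | h
    · left; rw [hgC, sub_eq_zero.mp h]
    · right; rw [hgC]
      have : d = -(Complex.I / c) := by linear_combination h
      rw [this]
end

section
/- Suppose P(t) ∈ ℂ[t] has odd degree ≥ 3, no multiple roots, and t | P. Then the unit group of R_2(P) = ℂ[t,t⁻¹,u]/(u² - P(t)) equals {c·t^k : c ∈ ℂ*, k ∈ ℤ}, and is isomorphic as a group to ℂ* × ℤ. -/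
open Polynomial

/-!
Write `L = ℂ[t,t⁻¹]`. `R_2(P)` is the quadratic algebra `L[√P]`, so `x + y√P` is a unit iff its
norm `x² - P y²` is a unit of `L`, i.e. a monomial `c tᵏ`. After clearing denominators,
`A² - P B²` divides a power of `t` in `ℂ[t]`, so its degree and trailing degree agree. This forces
`B = 0`: `P` has odd degree and, being separable and divisible by `t`, trailing degree `1`, so `A²`
and `P B²` differ in parity at both ends and nothing cancels (and if `A = 0`, `P` itself would be a
monomial, which `deg P ≥ 3` rules out). Hence every unit lies in `L`, where units are `c tᵏ`.
-/

namespace Polynomial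

variable {R : Type*} [CommRing R] {p q : R[X]}

theorem natTrailingDegree_sub_le_left (hp : p ≠ 0)
    (h : p.natTrailingDegree < q.natTrailingDegree) :
    (p - q).natTrailingDegree ≤ p.natTrailingDegree := by
  refine natTrailingDegree_le_of_ne_zero ?_
  rw [coeff_sub, coeff_eq_zero_of_lt_natTrailingDegree h, sub_zero]
  exact trailingCoeff_nonzero_iff_nonzero.mpr hp

theorem natTrailingDegree_sub_lt_natDegree_sub (hp : p ≠ 0) (hq : q ≠ 0)
    (hdeg : p.natDegree ≠ q.natDegree) (htrail : p.natTrailingDegree ≠ q.natTrailingDegree) :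
    (p - q).natTrailingDegree < (p - q).natDegree := by
  have htrail_le : (p - q).natTrailingDegree ≤ min p.natTrailingDegree q.natTrailingDegree := by
    rcases htrail.lt_or_gt with h | h
    · have := natTrailingDegree_sub_le_left hp h
      omega
    · have := natTrailingDegree_sub_le_left hq h
      rw [← neg_sub, natTrailingDegree_neg]
      omega
  have hdeg_eq : (p - q).natDegree = max p.natDegree q.natDegree := by
    rcases hdeg.lt_or_gt with h | h
    · rw [natDegree_sub_eq_right_of_natDegree_lt h]
      omega
    · rw [natDegree_sub_eq_left_of_natDegree_lt h]
      omega
  have := p.natTrailingDegree_le_natDegree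
  have := q.natTrailingDegree_le_natDegree
  omega

theorem Separable.natTrailingDegree_eq_one [Nontrivial R] {P : R[X]} (hsep : P.Separable)
    (hX : X ∣ P) : P.natTrailingDegree = 1 := by
  rw [← rootMultiplicity_eq_natTrailingDegree']
  refine le_antisymm (rootMultiplicity_le_one_of_separable hsep 0) ?_
  rw [Nat.one_le_iff_ne_zero, ← Nat.pos_iff_ne_zero, rootMultiplicity_pos hsep.ne_zero, IsRoot,
    ← coeff_zero_eq_eval_zero, ← X_dvd_iff]
  exact hX

variable [NoZeroDivisors R]

theorem natTrailingDegree_eq_natDegree_of_dvd_X_pow {n : ℕ} (h : q ∣ X ^ n) :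
    q.natTrailingDegree = q.natDegree := by
  obtain ⟨r, hr⟩ := h
  nontriviality R
  have hq : q ≠ 0 := by rintro rfl; simp at hr
  have hr0 : r ≠ 0 := by rintro rfl; simp at hr
  have hdeg := natDegree_mul hq hr0
  have htrail := natTrailingDegree_mul hq hr0
  rw [← hr, natDegree_X_pow] at hdeg
  rw [← hr, natTrailingDegree_X_pow] at htrail
  have := q.natTrailingDegree_le_natDegree
  have := r.natTrailingDegree_le_natDegree
  omega

theorem eq_zero_of_sq_sub_mul_sq_dvd_X_pow {P A B : R[X]} (hdeg : Odd P.natDegree)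
    (htrail : Odd P.natTrailingDegree) (hP : P.natTrailingDegree ≠ P.natDegree) {n : ℕ}
    (h : A ^ 2 - P * B ^ 2 ∣ X ^ n) : B = 0 := by
  nontriviality R
  by_contra hB
  have hP0 : P ≠ 0 := by rintro rfl; simp at hP
  by_cases hA : A = 0
  · have hPX : P ∣ X ^ n := dvd_trans ⟨-B ^ 2, by rw [hA]; ring⟩ h
    exact hP (natTrailingDegree_eq_natDegree_of_dvd_X_pow hPX)
  · have hlt := natTrailingDegree_sub_lt_natDegree_sub (pow_ne_zero 2 hA)
      (mul_ne_zero hP0 (pow_ne_zero 2 hB)) ?_ ?_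
    · exact hlt.ne (natTrailingDegree_eq_natDegree_of_dvd_X_pow h)
    · rw [natDegree_pow, natDegree_mul hP0 (pow_ne_zero 2 hB), natDegree_pow]
      rintro h'
      obtain ⟨k, hk⟩ := hdeg
      omega
    · rw [sq, sq, natTrailingDegree_mul hA hA, natTrailingDegree_mul hP0 (mul_ne_zero hB hB),
        natTrailingDegree_mul hB hB]
      obtain ⟨k, hk⟩ := htrail
      omega

end Polynomial

namespace LaurentPolynomial

variable {R : Type*} [CommRing R]

theorem exists_dvd_X_pow_of_isUnit_toLaurent {q : R[X]} (h : IsUnit (toLaurent q)) :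
    ∃ n : ℕ, q ∣ X ^ n := by
  obtain ⟨v, hv⟩ := isUnit_iff_exists_inv.mp h
  obtain ⟨n, f, hf⟩ := v.exists_T_pow
  refine ⟨n, f, toLaurent_injective ?_⟩
  rw [map_mul, hf, ← mul_assoc, hv, one_mul, toLaurent_X_pow]

theorem exists_toLaurent_eq_mul_T_pow (x y : R[T;T⁻¹]) :
    ∃ (N : ℕ) (A B : R[X]), toLaurent A = x * T N ∧ toLaurent B = y * T N := by
  obtain ⟨n, A, hA⟩ := x.exists_T_pow
  obtain ⟨m, B, hB⟩ := y.exists_T_pow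
  refine ⟨n + m, A * X ^ m, B * X ^ n, ?_, ?_⟩
  · rw [map_mul, hA, toLaurent_X_pow, mul_assoc, ← T_add]
    push_cast
    rfl
  · rw [map_mul, hB, toLaurent_X_pow, mul_assoc, ← T_add]
    push_cast
    rw [add_comm]

noncomputable def unitsHom : Rˣ × Multiplicative ℤ →* (R[T;T⁻¹])ˣ :=
  (Units.map (C : R →+* R[T;T⁻¹]).toMonoidHom).coprod (AddMonoidAlgebra.of R ℤ).toHomUnits

theorem coe_unitsHom_apply (c : Rˣ) (k : Multiplicative ℤ) :
    (unitsHom (c, k) : R[T;T⁻¹]) = C (c : R) * T k.toAdd := rfl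

variable [IsDomain R]

theorem isUnit_iff {x : R[T;T⁻¹]} :
    IsUnit x ↔ ∃ (c : R) (k : ℤ), IsUnit c ∧ x = C c * T k := by
  refine ⟨fun hx ↦ ?_, ?_⟩
  · obtain ⟨n, A, hA⟩ := x.exists_T_pow
    obtain ⟨m, hm⟩ := exists_dvd_X_pow_of_isUnit_toLaurent (hA ▸ hx.mul (isUnit_T n))
    obtain ⟨i, -, hi⟩ := (dvd_prime_pow prime_X m).mp hm
    obtain ⟨u, hu⟩ := hi.symm
    obtain ⟨c, hc, hcu⟩ := Polynomial.isUnit_iff.mp u.isUnit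
    refine ⟨c, i - n, hc, ?_⟩
    calc x = x * T n * T (-n) := by rw [mul_assoc, ← T_add, add_neg_cancel, T_zero, mul_one]
      _ = C c * T (i - n) := by
        rw [← hA, ← hu, ← hcu, map_mul, toLaurent_X_pow, Polynomial.toLaurent_C, T_sub]
        ring
  · rintro ⟨c, k, hc, rfl⟩
    exact (hc.map C).mul (isUnit_T k)

theorem unitsHom_bijective : Function.Bijective (unitsHom : Rˣ × Multiplicative ℤ →* _) := by
  refine ⟨fun ⟨c, k⟩ ⟨c', k'⟩ h ↦ ?_, fun u ↦ ?_⟩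
  · have h' := congrArg Units.val h
    simp only [coe_unitsHom_apply, ← single_eq_C_mul_T] at h'
    rcases AddMonoidAlgebra.single_inj.mp h' with ⟨hk, hc⟩ | ⟨hc, -⟩
    · exact Prod.ext (Units.ext hc) hk
    · exact absurd hc c.ne_zero
  · obtain ⟨c, k, hc, hu⟩ := isUnit_iff.mp u.isUnit
    exact ⟨(hc.unit, .ofAdd k), Units.ext hu.symm⟩

theorem eq_zero_of_isUnit_sq_sub_mul_sq {P : R[X]} (hdeg : Odd P.natDegree)
    (htrail : Odd P.natTrailingDegree) (hP : P.natTrailingDegree ≠ P.natDegree)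
    {x y : R[T;T⁻¹]} (h : IsUnit (x ^ 2 - toLaurent P * y ^ 2)) : y = 0 := by
  obtain ⟨N, A, B, hA, hB⟩ := exists_toLaurent_eq_mul_T_pow x y
  have hAB : toLaurent (A ^ 2 - P * B ^ 2) = (x ^ 2 - toLaurent P * y ^ 2) * T N ^ 2 := by
    rw [map_sub, map_mul, map_pow, map_pow, hA, hB]
    ring
  obtain ⟨n, hn⟩ := exists_dvd_X_pow_of_isUnit_toLaurent (hAB ▸ h.mul ((isUnit_T N).pow 2))
  have hB0 : y * T N = 0 := by
    rw [← hB, eq_zero_of_sq_sub_mul_sq_dvd_X_pow hdeg htrail hP hn, map_zero]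
  exact (isUnit_T N).mul_left_eq_zero.mp hB0

end LaurentPolynomial

namespace QuadraticAlgebra

variable {R : Type*} [CommRing R] {r : R}

theorem isUnit_iff_exists_algebraMap (h : ∀ x y : R, IsUnit (x ^ 2 - r * y ^ 2) → y = 0)
    {z : QuadraticAlgebra R r 0} : IsUnit z ↔ ∃ x, IsUnit x ∧ algebraMap R _ x = z := by
  refine ⟨fun hz ↦ ?_, fun ⟨x, hx, hxz⟩ ↦ hxz ▸ hx.map _⟩
  have hnorm : IsUnit (z.re ^ 2 - r * z.im ^ 2) := by
    convert isUnit_iff_norm_isUnit.mp hz using 1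
    rw [norm_def]
    ring
  have him := h _ _ hnorm
  refine ⟨z.re, ?_, by ext <;> simp [him]⟩
  rw [him] at hnorm
  simpa using hnorm

end QuadraticAlgebra

namespace AdjoinRoot

variable {R : Type*} [CommRing R] (r : R)

noncomputable def equivQuadraticAlgebra : AdjoinRoot (X ^ 2 - C r) ≃ₐ[R] QuadraticAlgebra R r 0 :=
  AlgEquiv.ofAlgHom
    (liftAlgHom _ (Algebra.ofId _ _) QuadraticAlgebra.omega
      (by simp [sq, QuadraticAlgebra.omega_mul_omega_eq_algebraMap]))
    (QuadraticAlgebra.lift ⟨root _, by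
      have := eval₂_root (X ^ 2 - C r)
      simp only [eval₂_sub, eval₂_X_pow, eval₂_C, sub_eq_zero] at this
      simp [← sq, this, Algebra.smul_def]⟩)
    (QuadraticAlgebra.algHom_ext (by simp))
    (algHom_ext (by simp))

variable {r}

theorem algebraMap_injective_of_X_sq_sub_C :
    Function.Injective (algebraMap R (AdjoinRoot (X ^ 2 - C r))) := fun x y hxy ↦
  QuadraticAlgebra.algebraMap_injective (by
    rw [← (equivQuadraticAlgebra r).commutes, hxy, AlgEquiv.commutes])

theorem isUnit_iff_exists_algebraMap (h : ∀ x y : R, IsUnit (x ^ 2 - r * y ^ 2) → y = 0)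
    {z : AdjoinRoot (X ^ 2 - C r)} : IsUnit z ↔ ∃ x, IsUnit x ∧ algebraMap R _ x = z := by
  rw [← isUnit_map_iff (equivQuadraticAlgebra r),
    QuadraticAlgebra.isUnit_iff_exists_algebraMap h]
  refine exists_congr fun x ↦ and_congr_right fun _ ↦ ?_
  rw [← AlgEquiv.commutes (equivQuadraticAlgebra r), (equivQuadraticAlgebra r).injective.eq_iff]

theorem bijective_unitsMap_algebraMap (h : ∀ x y : R, IsUnit (x ^ 2 - r * y ^ 2) → y = 0) :
    Function.Bijective (Units.map (algebraMap R (AdjoinRoot (X ^ 2 - C r))).toMonoidHom) := by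
  refine ⟨Units.map_injective algebraMap_injective_of_X_sq_sub_C, fun u ↦ ?_⟩
  obtain ⟨x, hx, hxu⟩ := (isUnit_iff_exists_algebraMap h).mp u.isUnit
  exact ⟨hx.unit, Units.ext hxu⟩

end AdjoinRoot

/-- If `P` is separable of odd degree `≥ 3` with `t ∣ P`, the unit group of
`R_2(P)` is `{c·t^k : c ∈ ℂ*, k ∈ ℤ} ≅ ℂ* × ℤ`. -/
theorem stmt_15 (P : Polynomial ℂ) (hodd : Odd P.natDegree) (h3 : 3 ≤ P.natDegree)
    (hsep : P.Separable) (hdvd : X ∣ P) :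
    (∀ z : R2P P, IsUnit z ↔
      ∃ (c : ℂ) (k : ℤ), c ≠ 0 ∧
        z = (algebraMap ℂ (R2P P) : ℂ →+* R2P P) c *
          Ideal.Quotient.mk (R2ideal P) (C (LaurentPolynomial.T k))) ∧
    Nonempty ((R2P P)ˣ ≃* ℂˣ × Multiplicative ℤ) := by
  have htrail := hsep.natTrailingDegree_eq_one hdvd
  have hnorm : ∀ x y : LaurentPolynomial ℂ, IsUnit (x ^ 2 - toLaurent P * y ^ 2) → y = 0 :=
    fun _ _ ↦ LaurentPolynomial.eq_zero_of_isUnit_sq_sub_mul_sq hodd (htrail ▸ odd_one)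
      (by omega)
  -- `R2P P` is `AdjoinRoot (X ^ 2 - C (toLaurent P))` by definition.
  have hmonomial (c : ℂ) (k : ℤ) :
      algebraMap (LaurentPolynomial ℂ) (AdjoinRoot (X ^ 2 - C (toLaurent P)))
        (LaurentPolynomial.C c * LaurentPolynomial.T k) =
      (algebraMap ℂ (R2P P) : ℂ →+* R2P P) c *
        Ideal.Quotient.mk (R2ideal P) (C (LaurentPolynomial.T k)) := by
    rw [map_mul]
    rfl
  refine ⟨fun z ↦ (AdjoinRoot.isUnit_iff_exists_algebraMap hnorm (z := z)).trans ⟨?_, ?_⟩,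
    ⟨(MulEquiv.ofBijective _ (AdjoinRoot.bijective_unitsMap_algebraMap hnorm)).symm.trans
      (MulEquiv.ofBijective _ LaurentPolynomial.unitsHom_bijective).symm⟩⟩
  · rintro ⟨x, hx, rfl⟩
    obtain ⟨c, k, hc, rfl⟩ := LaurentPolynomial.isUnit_iff.mp hx
    exact ⟨c, k, hc.ne_zero, hmonomial c k⟩
  · rintro ⟨c, k, hc, rfl⟩
    exact ⟨_, LaurentPolynomial.isUnit_iff.mpr ⟨c, k, hc.isUnit, rfl⟩, hmonomial c k⟩
end

section
/- Let P(t) = (t⁴ - 2βt² + 1)/(β² - 1) with β ≠ ±1, and set q(t) = (t² - β)/√(β² - 1), λ₀ = q + √P. Then the unit group of S_2(P) = ℂ[t,u]/(u² - P(t)) is exactly {c·λ₀^i : c ∈ ℂ*, i ∈ ℤ}, isomorphic to ℂ* × ℤ; in particular λ₀·(q - √P) = 1. -/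
/-!
`S_2(P)` is the quadratic algebra `ℂ[t] ⊕ ℂ[t]·√P`, and here `P = q² - 1`. An element
`A + B√P` is a unit iff its norm `N = A² - P B²` is a unit of `ℂ[t]`, i.e. a nonzero
constant. For such a unit with `B ≠ 0`, the polynomials `qB - A` and `qB + A` have product
`B² - N`, of degree at most `2 deg B`, and sum `2qB`, of degree greater than `deg B`; so one
of them has degree less than `deg B`. They are the `√P`-coefficients of `(A + B√P)λ₀⁻¹` and
`(A + B√P)λ₀`, so multiplying by `λ₀^{∓1}` lowers `deg B` until `B = 0`, where the unit is a
constant. Conversely no `λ₀ⁿ` with `n ≠ 0` is constant: the `√P`-coefficient of `λ₀ⁿ⁺¹` is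
`A + qB` for `λ₀ⁿ = A + B√P`, and `deg B < deg (A + qB)` propagates from `n` to `n + 1`.
-/

open Polynomial

/-- The defining ideal of `S_2(P) = ℂ[t,u]/(u² - P(t))`. -/
noncomputable abbrev S2ideal (P : Polynomial ℂ) : Ideal (Polynomial (Polynomial ℂ)) :=
  Ideal.span {(X : Polynomial (Polynomial ℂ)) ^ 2 - C P}

/-- `S_2(P) = ℂ[t,u]/(u² - P(t))`. -/
abbrev S2P (P : Polynomial ℂ) : Type :=
  Polynomial (Polynomial ℂ) ⧸ S2ideal P

open scoped QuadraticAlgebra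

namespace QuadraticAlgebra

variable {R : Type*} [CommRing R]

noncomputable def adjoinRootAlgEquiv (a b : R) :
    AdjoinRoot (X ^ 2 - C b * X - C a) ≃ₐ[R] QuadraticAlgebra R a b :=
  AlgEquiv.ofAlgHom
    (AdjoinRoot.liftAlgHom _ (Algebra.ofId R _) ω (by
      simp [eval₂_sub, sq, omega_mul_omega_eq_algebraMap]))
    (lift ⟨AdjoinRoot.root _, by
      have h := AdjoinRoot.eval₂_root (X ^ 2 - C b * X - C a)
      simp only [eval₂_sub, eval₂_mul, eval₂_X_pow, eval₂_C, eval₂_X] at h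
      simp only [Algebra.smul_def, mul_one, AdjoinRoot.algebraMap_eq]
      linear_combination h⟩)
    (algHom_ext (by simp))
    (AdjoinRoot.algHom_ext (by simp))

@[simp] lemma adjoinRootAlgEquiv_root (a b : R) :
    adjoinRootAlgEquiv a b (AdjoinRoot.root _) = ω := by
  simp [adjoinRootAlgEquiv]

end QuadraticAlgebra

namespace S2P

lemma X_sq_sub_C_eq (P : ℂ[X]) : (X ^ 2 - C P : ℂ[X][X]) = X ^ 2 - C 0 * X - C P := by simp

noncomputable def equivQuadraticAlgebra (P : ℂ[X]) :
    S2P P ≃ₐ[ℂ[X]] QuadraticAlgebra ℂ[X] P 0 :=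
  (AdjoinRoot.algEquivOfEq ℂ[X] _ _ (X_sq_sub_C_eq P)).trans
    (QuadraticAlgebra.adjoinRootAlgEquiv P 0)

lemma equivQuadraticAlgebra_mk_X (P : ℂ[X]) :
    equivQuadraticAlgebra P (Ideal.Quotient.mk _ X) = ω :=
  (congrArg (QuadraticAlgebra.adjoinRootAlgEquiv P 0)
    (AdjoinRoot.algEquivOfEq_root _ _ (X_sq_sub_C_eq P))).trans
    (QuadraticAlgebra.adjoinRootAlgEquiv_root P 0)

lemma equivQuadraticAlgebra_mk_C (P A : ℂ[X]) :
    equivQuadraticAlgebra P (Ideal.Quotient.mk _ (C A)) = algebraMap ℂ[X] _ A :=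
  (equivQuadraticAlgebra P).commutes A

lemma equivQuadraticAlgebra_algebraMap (P : ℂ[X]) (c : ℂ) :
    equivQuadraticAlgebra P ((algebraMap ℂ (S2P P) : ℂ →+* S2P P) c) =
      algebraMap ℂ (QuadraticAlgebra ℂ[X] P 0) c := by
  rw [IsScalarTower.algebraMap_apply ℂ ℂ[X] (S2P P) c, AlgEquiv.commutes,
    ← IsScalarTower.algebraMap_apply ℂ ℂ[X] (QuadraticAlgebra ℂ[X] P 0) c]

end S2P

namespace Polynomial

variable {R : Type*} [CommRing R] [NoZeroDivisors R]

theorem degree_lt_or_degree_lt_of_natDegree_mul_le {u v B : R[X]} (hB : B ≠ 0)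
    (hmul : (u * v).natDegree ≤ 2 * B.natDegree) (hadd : B.natDegree < (u + v).natDegree) :
    u.degree < B.degree ∨ v.degree < B.degree := by
  by_contra! h
  have hu : u ≠ 0 := by rintro rfl; simp [degree_eq_bot.not.mpr hB] at h
  have hv : v ≠ 0 := by rintro rfl; simp [degree_eq_bot.not.mpr hB] at h
  have hBu := natDegree_le_natDegree h.1
  have hBv := natDegree_le_natDegree h.2
  rw [natDegree_mul hu hv] at hmul
  have := natDegree_add_le u v
  omega

theorem natDegree_lt_natDegree_two_mul_mul [NeZero (2 : R)] {q B : R[X]} (hq : 0 < q.degree)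
    (hB : B ≠ 0) : B.natDegree < (2 * (q * B)).natDegree := by
  rw [← C_ofNat, natDegree_C_mul two_ne_zero, natDegree_mul (ne_zero_of_degree_gt hq) hB]
  have := natDegree_pos_iff_degree_pos.mpr hq
  omega

theorem C_inv_mul_quartic_eq_sq_sub_one {K : Type*} [Field K] {β s : K}
    (hs : s ^ 2 = β ^ 2 - 1) (hs0 : s ≠ 0) :
    C ((β ^ 2 - 1)⁻¹) * (X ^ 4 - C (2 * β) * X ^ 2 + 1) =
      (C s⁻¹ * (X ^ 2 - C β)) ^ 2 - 1 := by
  have hinv : C s⁻¹ * C s = (1 : K[X]) := by rw [← C_mul, inv_mul_cancel₀ hs0, C_1]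
  have hsC : C s ^ 2 = C β ^ 2 - (1 : K[X]) := by rw [← C_pow, hs, C_sub, C_pow, C_1]
  rw [← hs, ← inv_pow, C_pow, C_mul, C_ofNat]
  linear_combination (C s⁻¹) ^ 2 * hsC - (1 + C s⁻¹ * C s) * hinv

end Polynomial

variable {R : Type*} [CommRing R]

/-- `R[t][√P]` for the Pell polynomial `P = q² - 1`. -/
abbrev PellAlgebra (q : R[X]) : Type _ := QuadraticAlgebra R[X] (q ^ 2 - 1) 0

namespace PellAlgebra

variable {q : R[X]}

/-- `λ₀ = q + √P`, with inverse `q - √P`. -/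
noncomputable def fundamentalUnit (q : R[X]) : (PellAlgebra q)ˣ where
  val := ⟨q, 1⟩
  inv := ⟨q, -1⟩
  val_inv := by ext : 1 <;> simp; ring
  inv_val := by ext : 1 <;> simp; ring

@[simp] lemma val_fundamentalUnit : (fundamentalUnit q : PellAlgebra q) = ⟨q, 1⟩ := rfl

@[simp] lemma val_inv_fundamentalUnit :
    ((fundamentalUnit q)⁻¹ : (PellAlgebra q)ˣ) = (⟨q, -1⟩ : PellAlgebra q) := rfl

lemma re_mul_fundamentalUnit (z : PellAlgebra q) :
    (z * fundamentalUnit q).re = q * z.re + (q ^ 2 - 1) * z.im := by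
  simp [mul_comm]

lemma im_mul_fundamentalUnit (z : PellAlgebra q) :
    (z * fundamentalUnit q).im = z.re + q * z.im := by
  simp [mul_comm]

lemma im_mul_inv_fundamentalUnit (z : PellAlgebra q) :
    (z * ↑(fundamentalUnit q)⁻¹).im = q * z.im - z.re := by
  simp; ring

noncomputable def unitsHom (q : R[X]) : Rˣ × Multiplicative ℤ →* (PellAlgebra q)ˣ :=
  (Units.map (algebraMap R (PellAlgebra q) : R →* PellAlgebra q)).coprod
    (zpowersHom _ (fundamentalUnit q))

lemma unitsHom_apply (c : Rˣ) (n : Multiplicative ℤ) :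
    unitsHom q (c, n) =
      Units.map (algebraMap R (PellAlgebra q) : R →* PellAlgebra q) c *
        fundamentalUnit q ^ n.toAdd :=
  rfl

variable [NoZeroDivisors R]

theorem exists_eq_algebraMap_of_im_eq_zero {z : PellAlgebra q} (hz : IsUnit z) (him : z.im = 0) :
    ∃ c : Rˣ, z = algebraMap R _ (c : R) := by
  have hre : IsUnit z.re := by
    have := QuadraticAlgebra.isUnit_iff_norm_isUnit.mp hz
    rwa [QuadraticAlgebra.norm_def, him, mul_zero, mul_zero, add_zero, sub_zero,
      isUnit_mul_self_iff] at this
  obtain ⟨c, hc, hcz⟩ := Polynomial.isUnit_iff.mp hre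
  exact ⟨hc.unit, QuadraticAlgebra.ext hcz.symm him⟩

variable [NeZero (2 : R)]

theorem degree_im_mul_inv_lt_or_degree_im_mul_lt (hq : 0 < q.degree) {z : PellAlgebra q}
    (hz : IsUnit z) (him : z.im ≠ 0) :
    (z * ↑(fundamentalUnit q)⁻¹).im.degree < z.im.degree ∨
      (z * fundamentalUnit q).im.degree < z.im.degree := by
  obtain ⟨c, -, hc⟩ := Polynomial.isUnit_iff.mp (QuadraticAlgebra.isUnit_iff_norm_isUnit.mp hz)
  rw [im_mul_inv_fundamentalUnit, im_mul_fundamentalUnit]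
  apply degree_lt_or_degree_lt_of_natDegree_mul_le him
  · have hprod : (q * z.im - z.re) * (z.re + q * z.im) = z.im ^ 2 - C c := by
      rw [hc, QuadraticAlgebra.norm_def]; ring
    rw [hprod]
    refine (natDegree_sub_le _ _).trans (max_le ?_ ?_) <;> simp
  · convert natDegree_lt_natDegree_two_mul_mul hq him using 2
    ring

theorem exists_eq_algebraMap_mul_zpow (hq : 0 < q.degree) {z : PellAlgebra q} (hz : IsUnit z) :
    ∃ c : Rˣ, ∃ n : ℤ, z = algebraMap R _ (c : R) * ↑(fundamentalUnit q ^ n) := by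
  induction hd : z.im.degree using WellFoundedLT.induction generalizing z with
  | _ d ih =>
    by_cases him : z.im = 0
    · obtain ⟨c, rfl⟩ := exists_eq_algebraMap_of_im_eq_zero hz him
      exact ⟨c, 0, by simp⟩
    rcases degree_im_mul_inv_lt_or_degree_im_mul_lt hq hz him with h | h
    · obtain ⟨c, n, hc⟩ := ih _ (hd ▸ h) (hz.mul (Units.isUnit _)) rfl
      refine ⟨c, n + 1, ?_⟩
      rw [zpow_add_one, Units.val_mul, ← mul_assoc, ← hc, mul_assoc, Units.inv_mul, mul_one]
    · obtain ⟨c, n, hc⟩ := ih _ (hd ▸ h) (hz.mul (Units.isUnit _)) rfl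
      refine ⟨c, n - 1, ?_⟩
      rw [zpow_sub_one, Units.val_mul, ← mul_assoc, ← hc, mul_assoc, Units.mul_inv, mul_one]

theorem degree_im_lt_degree_re_add_mul_im (hq : 0 < q.degree) (n : ℕ) :
    ((fundamentalUnit q : PellAlgebra q) ^ n).im.degree <
      (((fundamentalUnit q : PellAlgebra q) ^ n).re +
        q * ((fundamentalUnit q : PellAlgebra q) ^ n).im).degree := by
  induction n with
  | zero =>
    have : Nontrivial R := nontrivial_of_ne 2 0 two_ne_zero
    simp
  | succ n ih =>
    rw [pow_succ (fundamentalUnit q : PellAlgebra q), re_mul_fundamentalUnit,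
      im_mul_fundamentalUnit]
    set A := ((fundamentalUnit q : PellAlgebra q) ^ n).re
    set B := ((fundamentalUnit q : PellAlgebra q) ^ n).im
    have hlt := degree_lt_degree (natDegree_lt_natDegree_two_mul_mul hq (ne_zero_of_degree_gt ih))
    rw [show q * A + (q ^ 2 - 1) * B + q * (A + q * B) = 2 * (q * (A + q * B)) - B by ring,
      degree_sub_eq_left_of_degree_lt (ih.trans hlt)]
    exact hlt

theorem im_pow_ne_zero (hq : 0 < q.degree) {n : ℕ} (hn : n ≠ 0) :
    ((fundamentalUnit q : PellAlgebra q) ^ n).im ≠ 0 := by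
  obtain ⟨n, rfl⟩ := Nat.exists_eq_add_one_of_ne_zero hn
  rw [pow_succ (fundamentalUnit q : PellAlgebra q), im_mul_fundamentalUnit]
  exact ne_zero_of_degree_gt (degree_im_lt_degree_re_add_mul_im hq n)

theorem eq_zero_of_pow_eq_algebraMap (hq : 0 < q.degree) {m : ℕ} {r : R}
    (h : (fundamentalUnit q : PellAlgebra q) ^ m = algebraMap R _ r) : m = 0 := by
  by_contra hm
  exact im_pow_ne_zero hq hm (by rw [h]; rfl)

theorem unitsHom_surjective (hq : 0 < q.degree) : Function.Surjective (unitsHom q) := by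
  intro u
  obtain ⟨c, n, h⟩ := exists_eq_algebraMap_mul_zpow hq u.isUnit
  exact ⟨(c, .ofAdd n), Units.ext (by rw [unitsHom_apply, h]; rfl)⟩

theorem unitsHom_injective (hq : 0 < q.degree) : Function.Injective (unitsHom q) := by
  rw [injective_iff_map_eq_one]
  rintro ⟨c, n⟩ h
  rw [unitsHom_apply] at h
  set H := (Units.map (algebraMap R (PellAlgebra q) : R →* PellAlgebra q)).range
  have hn : fundamentalUnit q ^ n.toAdd ∈ H := by
    rw [eq_inv_of_mul_eq_one_right h]
    exact H.inv_mem ⟨c, rfl⟩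
  have habs : fundamentalUnit q ^ n.toAdd.natAbs ∈ H := by
    rcases Int.natAbs_eq n.toAdd with h' | h'
    · rwa [h', zpow_natCast] at hn
    · rw [h', zpow_neg, zpow_natCast] at hn
      simpa using H.inv_mem hn
  obtain ⟨r, hr⟩ := habs
  have hn1 : n = 1 := by
    simpa using eq_zero_of_pow_eq_algebraMap hq (congrArg Units.val hr).symm
  subst hn1
  rw [toAdd_one, zpow_zero, mul_one] at h
  have hc1 : c = 1 := Units.ext <| C_injective <| congrArg (·.re) (congrArg Units.val h)
  rw [hc1]
  rfl

noncomputable def unitsEquiv (hq : 0 < q.degree) :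
    (PellAlgebra q)ˣ ≃* Rˣ × Multiplicative ℤ :=
  (MulEquiv.ofBijective (unitsHom q) ⟨unitsHom_injective hq, unitsHom_surjective hq⟩).symm

theorem isUnit_iff (hq : 0 < q.degree) {z : PellAlgebra q} :
    IsUnit z ↔ ∃ c : R, IsUnit c ∧ ∃ a b : ℕ,
      z = algebraMap R _ c * ↑(fundamentalUnit q) ^ a * ↑(fundamentalUnit q)⁻¹ ^ b := by
  constructor
  · intro hz
    obtain ⟨c, n, rfl⟩ := exists_eq_algebraMap_mul_zpow hq hz
    refine ⟨c, c.isUnit, n.toNat, (-n).toNat, ?_⟩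
    rw [mul_assoc, ← Units.val_pow_eq_pow_val, ← Units.val_pow_eq_pow_val, ← Units.val_mul,
      inv_pow, ← zpow_natCast, ← zpow_natCast, ← zpow_neg, ← zpow_add, ← sub_eq_add_neg,
      Int.toNat_sub_toNat_neg]
  · rintro ⟨c, hc, a, b, rfl⟩
    exact ((hc.map _).mul ((Units.isUnit _).pow a)).mul ((Units.isUnit _).pow b)

end PellAlgebra

/-- For `P = (t⁴ - 2βt² + 1)/(β² - 1)` with `β ≠ ±1`, setting
`q = (t² - β)/√(β²-1)` and `λ₀ = q + √P`, we have `λ₀(q - √P) = 1`, the unit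
group of `S_2(P)` is exactly `{c·λ₀^i : c ∈ ℂ*, i ∈ ℤ}` (with negative powers
of `λ₀` given by powers of its inverse `q - √P`), and it is isomorphic to
`ℂ* × ℤ`. -/
theorem stmt_16 (β : ℂ) (hβ : β ≠ 1) (hβ' : β ≠ -1) (s : ℂ) (hs : s ^ 2 = β ^ 2 - 1)
    (P q : Polynomial ℂ)
    (hP : P = C ((β ^ 2 - 1)⁻¹) * (X ^ 4 - C (2 * β) * X ^ 2 + 1))
    (hq : q = C s⁻¹ * (X ^ 2 - C β)) :
    (Ideal.Quotient.mk (S2ideal P) (C q) + Ideal.Quotient.mk (S2ideal P) X) *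
        (Ideal.Quotient.mk (S2ideal P) (C q) - Ideal.Quotient.mk (S2ideal P) X) = 1 ∧
    (∀ z : S2P P, IsUnit z ↔
      ∃ c : ℂ, c ≠ 0 ∧ ∃ a b : ℕ,
        z = (algebraMap ℂ (S2P P) : ℂ →+* S2P P) c *
          (Ideal.Quotient.mk (S2ideal P) (C q) + Ideal.Quotient.mk (S2ideal P) X) ^ a *
          (Ideal.Quotient.mk (S2ideal P) (C q) - Ideal.Quotient.mk (S2ideal P) X) ^ b) ∧
    Nonempty ((S2P P)ˣ ≃* ℂˣ × Multiplicative ℤ) := by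
  have hs0 : s ≠ 0 := by
    rintro rfl
    refine mul_ne_zero (sub_ne_zero.mpr hβ) (fun h => hβ' (eq_neg_of_add_eq_zero_left h)) ?_
    linear_combination -hs
  have hdeg : 0 < q.degree := by
    rw [hq, degree_C_mul (inv_ne_zero hs0), degree_X_pow_sub_C two_pos]; norm_num
  obtain rfl : P = q ^ 2 - 1 := hq ▸ hP ▸ C_inv_mul_quartic_eq_sq_sub_one hs hs0
  set e := S2P.equivQuadraticAlgebra (q ^ 2 - 1)
  have hplus : e (Ideal.Quotient.mk _ (C q) + Ideal.Quotient.mk _ X) =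
      PellAlgebra.fundamentalUnit q := by
    rw [map_add, S2P.equivQuadraticAlgebra_mk_C, S2P.equivQuadraticAlgebra_mk_X]
    ext : 1 <;> simp
  have hminus : e (Ideal.Quotient.mk _ (C q) - Ideal.Quotient.mk _ X) =
      ↑(PellAlgebra.fundamentalUnit q)⁻¹ := by
    rw [map_sub, S2P.equivQuadraticAlgebra_mk_C, S2P.equivQuadraticAlgebra_mk_X]
    ext : 1 <;> simp
  refine ⟨e.injective ?_, fun z => ?_,
    ⟨(Units.mapEquiv e.toMulEquiv).trans (PellAlgebra.unitsEquiv hdeg)⟩⟩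
  · rw [map_mul, hplus, hminus, Units.mul_inv, map_one]
  · rw [← isUnit_map_iff e, PellAlgebra.isUnit_iff hdeg]
    refine exists_congr fun c => and_congr isUnit_iff_ne_zero (exists₂_congr fun a b => ?_)
    rw [← e.injective.eq_iff, map_mul, map_mul, map_pow, map_pow, hplus, hminus,
      S2P.equivQuadraticAlgebra_algebraMap]
end

section
/- Let P(t) = t(t-a₁)⋯(t-a_{2n}) with distinct nonzero a_i, and suppose c ∈ ℂ* and a permutation γ satisfy a_i·a_{γ(i)} = c for all i and ∏_{i=1}^{2n} a_i = c^n. Then the assignment t ↦ c·t⁻¹, √P ↦ ± t^{-n-1}·√(c^{n+1})·√P extends to a ℂ-algebra automorphism ψ of R_2(P) with ψ² = id. -/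
open Polynomial

/-!
The substitution `t ↦ c t⁻¹` is an involutive automorphism `σ` of `ℂ[t, t⁻¹]`. Because
`aᵢ a_{γ(i)} = c`, it sends each factor `t - aᵢ` to `-aᵢ t⁻¹ (t - a_{γ(i)})`, so together with
`∏ aᵢ = cⁿ` it gives `σ(P) = v² P` for `v = ε w t^{-n-1}`. Hence `σ` extends to `ℂ[t, t⁻¹][√P]`
by `√P ↦ v √P`, and this extension is again an involution because `σ(v) v = 1`.
-/

namespace LaurentPolynomial

section CommSemiring

variable {R : Type*} [CommSemiring R]

/-- The substitution `T ↦ c T⁻¹`. -/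
noncomputable def scaleInvert (c : Rˣ) : R[T;T⁻¹] →ₐ[R] R[T;T⁻¹] :=
  AddMonoidAlgebra.lift R R[T;T⁻¹] ℤ
    { toFun := fun m => C (↑(c ^ m.toAdd) : R) * T (-m.toAdd)
      map_one' := by simp
      map_mul' := fun x y => by
        simp only [toAdd_mul, zpow_add, Units.val_mul, map_mul, neg_add, T_add]
        ring }

theorem scaleInvert_T (c : Rˣ) (m : ℤ) : scaleInvert c (T m) = C (↑(c ^ m) : R) * T (-m) := by
  rw [scaleInvert, T, AddMonoidAlgebra.lift_single, one_smul]
  rfl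

theorem scaleInvert_C (c : Rˣ) (r : R) : scaleInvert c (C r) = C r := by
  rw [C_eq_algebraMap, AlgHom.commutes]

theorem scaleInvert_involutive (c : Rˣ) : Function.Involutive (scaleInvert c) := by
  suffices (scaleInvert c).comp (scaleInvert c) = AlgHom.id R _ from AlgHom.congr_fun this
  refine AddMonoidAlgebra.algHom_ext (fun m => ?_) (Subsingleton.elim _ _)
  change scaleInvert c (scaleInvert c (T m)) = T m
  rw [scaleInvert_T, map_mul, scaleInvert_C, scaleInvert_T, neg_neg, ← mul_assoc, ← map_mul,
    ← Units.val_mul, ← zpow_add, add_neg_cancel, zpow_zero, Units.val_one, map_one, one_mul]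

end CommSemiring

section CommRing

variable {R : Type*} [CommRing R]

theorem scaleInvert_prod_T_sub_C {ι : Type*} [Fintype ι] (c : Rˣ) (a : ι → R)
    (γ : Equiv.Perm ι) (hγ : ∀ i, a i * a (γ i) = c) :
    scaleInvert c (∏ i, (T 1 - C (a i))) =
      C (∏ i, -a i) * T (-Fintype.card ι) * ∏ i, (T 1 - C (a i)) := by
  have hT : (T (-1) : R[T;T⁻¹]) * T 1 = 1 := by rw [← T_add, neg_add_cancel, T_zero]
  have factor (i : ι) :
      scaleInvert c (T 1 - C (a i)) = C (-a i) * T (-1) * (T 1 - C (a (γ i))) := by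
    have hc : C (a i) * C (a (γ i)) = C (c : R) := by rw [← map_mul, hγ]
    rw [map_sub, scaleInvert_T, scaleInvert_C, zpow_one, map_neg]
    linear_combination C (a i) * hT - T (-1) * hc
  rw [map_prod, Finset.prod_congr rfl fun i _ => factor i, Finset.prod_mul_distrib,
    Finset.prod_mul_distrib, ← map_prod, Finset.prod_const, T_pow, Finset.card_univ,
    Equiv.prod_comp γ fun i => T 1 - C (a i)]
  simp

theorem scaleInvert_toLaurent_X_mul_prod {ι : Type*} [Fintype ι] {n : ℕ}
    (hι : Fintype.card ι = 2 * n) (c : Rˣ) (a : ι → R) (γ : Equiv.Perm ι)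
    (hγ : ∀ i, a i * a (γ i) = c) (hprod : ∏ i, a i = c ^ n) :
    scaleInvert c (toLaurent (X * ∏ i, (X - Polynomial.C (a i)))) =
      C ((c : R) ^ (n + 1)) * T (-(2 * n + 2)) *
        toLaurent (X * ∏ i, (X - Polynomial.C (a i))) := by
  have hneg : ∏ i, -a i = (c : R) ^ n := by
    rw [Finset.prod_neg, hprod, Finset.card_univ, hι, pow_mul, neg_one_sq, one_pow, one_mul]
  have hT : (T (-1) : R[T;T⁻¹]) * T (-(2 * n)) = T (-(2 * n + 2)) * T 1 := by
    rw [← T_add, ← T_add]; ring_nf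
  have hP : toLaurent (X * ∏ i, (X - Polynomial.C (a i))) = T 1 * ∏ i, (T 1 - C (a i)) := by
    simp
  rw [hP, map_mul, scaleInvert_prod_T_sub_C c a γ hγ, scaleInvert_T, hneg, hι, zpow_one,
    pow_succ', map_mul C]
  push_cast
  linear_combination C (c : R) * C ((c : R) ^ n) * hT * ∏ i, (T 1 - C (a i))

theorem scaleInvert_C_mul_T_mul_self (c : Rˣ) {s : R} {k : ℕ} (hs : s ^ 2 = c ^ k) :
    scaleInvert c (C s * T (-k)) * (C s * T (-k)) = 1 := by
  have hC : C (↑(c ^ (-(k : ℤ))) : R) * C s ^ 2 = 1 := by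
    rw [← map_pow, ← map_mul, hs, zpow_neg, zpow_natCast, ← Units.val_pow_eq_pow_val,
      Units.inv_mul, map_one]
  have hT : (T k : R[T;T⁻¹]) * T (-k) = 1 := by rw [← T_add, add_neg_cancel, T_zero]
  rw [map_mul, scaleInvert_C, scaleInvert_T, neg_neg]
  linear_combination C (↑(c ^ (-(k : ℤ))) : R) * C s ^ 2 * hT + hC

end CommRing

end LaurentPolynomial

namespace AdjoinRoot

variable {R A : Type*} [CommRing R] [CommRing A] [Algebra R A]

theorem root_sq (p : A) : root (X ^ 2 - C p) ^ 2 = of _ p := by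
  have h := eval₂_root (X ^ 2 - C p)
  rwa [eval₂_sub, eval₂_X_pow, eval₂_C, sub_eq_zero] at h

/-- The endomorphism of `A[√p]` that extends `σ` by `√p ↦ v √p`. -/
noncomputable def extendSqrt (σ : A →ₐ[R] A) {p : A} (v : A) (h : σ p = v ^ 2 * p) :
    AdjoinRoot (X ^ 2 - C p) →ₐ[R] AdjoinRoot (X ^ 2 - C p) :=
  liftAlgHom _ ((ofAlgHom R _).comp σ) (of _ v * root _) <| by
    simp only [eval₂_sub, eval₂_X_pow, eval₂_C]
    change (of _ v * root _) ^ 2 - of _ (σ p) = 0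
    rw [h, mul_pow, root_sq, map_mul, map_pow, sub_self]

variable (σ : A →ₐ[R] A) {p : A} (v : A) (h : σ p = v ^ 2 * p)

theorem extendSqrt_of (r : A) : extendSqrt σ v h (of _ r) = of _ (σ r) :=
  liftAlgHom_of ..

theorem extendSqrt_root : extendSqrt σ v h (root _) = of _ v * root _ :=
  liftAlgHom_root ..

theorem extendSqrt_involutive (hσ : Function.Involutive σ) (hv : σ v * v = 1) :
    Function.Involutive (extendSqrt σ v h) := by
  suffices (extendSqrt σ v h).comp (extendSqrt σ v h) = AlgHom.id R _ from
    AlgHom.congr_fun this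
  ext r
  · change extendSqrt σ v h (extendSqrt σ v h (of _ r)) = of _ r
    rw [extendSqrt_of, extendSqrt_of, hσ]
  · change extendSqrt σ v h (extendSqrt σ v h (root _)) = root _
    rw [extendSqrt_root, map_mul, extendSqrt_of, extendSqrt_root, ← mul_assoc, ← map_mul, hv,
      map_one, one_mul]

end AdjoinRoot

theorem stmt_19_general (n : ℕ) (a : Fin (2 * n) → ℂ)
    (P : Polynomial ℂ) (hP : P = X * ∏ i, (X - C (a i)))
    (c w : ℂ) (hc : c ≠ 0) (hw : w ^ 2 = c ^ (n + 1))
    (γ : Equiv.Perm (Fin (2 * n))) (hγ : ∀ i, a i * a (γ i) = c)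
    (hprod : ∏ i, a i = c ^ n)
    (ε : ℂ) (hε : ε = 1 ∨ ε = -1) :
    ∃ ψ : R2P P ≃ₐ[ℂ] R2P P,
      ψ (Ideal.Quotient.mk (R2ideal P) (C (LaurentPolynomial.T 1))) =
        @algebraMap ℂ (R2P P) inferInstance inferInstance _ c *
          Ideal.Quotient.mk (R2ideal P) (C (LaurentPolynomial.T (-1))) ∧
      ψ (Ideal.Quotient.mk (R2ideal P) X) =
        @algebraMap ℂ (R2P P) inferInstance inferInstance _ (ε * w) *
          (Ideal.Quotient.mk (R2ideal P) (C (LaurentPolynomial.T (-((n : ℤ) + 1)))) *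
            Ideal.Quotient.mk (R2ideal P) X) ∧
      ψ ^ 2 = 1 := by
  let u := Units.mk0 c hc
  let v := LaurentPolynomial.C (ε * w) * LaurentPolynomial.T (-((n : ℤ) + 1))
  have hεw : (ε * w) ^ 2 = (u : ℂ) ^ (n + 1) := by rcases hε with rfl | rfl <;> simp [u, hw]
  have hσP : LaurentPolynomial.scaleInvert u (toLaurent P) = v ^ 2 * toLaurent P := by
    rw [hP, LaurentPolynomial.scaleInvert_toLaurent_X_mul_prod (Fintype.card_fin _) u a γ hγ
      hprod, ← hεw, map_pow, mul_pow, LaurentPolynomial.T_pow]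
    ring_nf
  have hv : LaurentPolynomial.scaleInvert u v * v = 1 := by
    have h := LaurentPolynomial.scaleInvert_C_mul_T_mul_self u hεw
    push_cast at h
    exact h
  have hψ :=
    AdjoinRoot.extendSqrt_involutive _ v hσP (LaurentPolynomial.scaleInvert_involutive u) hv
  -- `R2P P` is `AdjoinRoot (X ^ 2 - C (toLaurent P))` by definition.
  refine ⟨AlgEquiv.ofBijective _ hψ.bijective, ?_, ?_, AlgEquiv.ext hψ⟩
  · change AdjoinRoot.extendSqrt _ v hσP (AdjoinRoot.of _ (LaurentPolynomial.T 1)) = _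
    rw [AdjoinRoot.extendSqrt_of, LaurentPolynomial.scaleInvert_T, map_mul, zpow_one,
      Units.val_mk0]
    rfl
  · change AdjoinRoot.extendSqrt _ v hσP (AdjoinRoot.root _) = _
    rw [AdjoinRoot.extendSqrt_root, map_mul, mul_assoc]
    rfl

/-- For `P = t(t-a₁)⋯(t-a_{2n})` separable with `aᵢ·a_{γ(i)} = c` for all `i`
and `∏ aᵢ = cⁿ`, the assignment `t ↦ c·t⁻¹`, `√P ↦ ±t^{-n-1}√(c^{n+1})·√P`
extends to a ℂ-algebra automorphism `ψ` of `R_2(P)` with `ψ² = id`. -/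
theorem stmt_19 (n : ℕ) (hn : 1 ≤ n) (a : Fin (2 * n) → ℂ)
    (ha0 : ∀ i, a i ≠ 0) (hainj : Function.Injective a)
    (P : Polynomial ℂ) (hP : P = X * ∏ i, (X - C (a i)))
    (c w : ℂ) (hc : c ≠ 0) (hw : w ^ 2 = c ^ (n + 1))
    (γ : Equiv.Perm (Fin (2 * n))) (hγ : ∀ i, a i * a (γ i) = c)
    (hprod : ∏ i, a i = c ^ n)
    (ε : ℂ) (hε : ε = 1 ∨ ε = -1) :
    ∃ ψ : R2P P ≃ₐ[ℂ] R2P P,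
      ψ (Ideal.Quotient.mk (R2ideal P) (C (LaurentPolynomial.T 1))) =
        @algebraMap ℂ (R2P P) inferInstance inferInstance _ c *
          Ideal.Quotient.mk (R2ideal P) (C (LaurentPolynomial.T (-1))) ∧
      ψ (Ideal.Quotient.mk (R2ideal P) X) =
        @algebraMap ℂ (R2P P) inferInstance inferInstance _ (ε * w) *
          (Ideal.Quotient.mk (R2ideal P) (C (LaurentPolynomial.T (-((n : ℤ) + 1)))) *
            Ideal.Quotient.mk (R2ideal P) X) ∧
      ψ ^ 2 = 1 :=
  stmt_19_general n a P hP c w hc hw γ hγ hprod ε hε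
end
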